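/- Fix s₀ > 0 and C₂ > 1. With L_n = ⌊(log n)^{1/2}⌋, there exists a constant c > 0 such that for all large n, L_n · (C₂^{2L_n}/n)^{s₀/(2s₀ + L_n)} ≤ c · (log n)^{1/2} · exp(−(s₀/2)·(log n)^{1/2}). -/

import Mathlib

/-!
Write `t = √(log n)` and `L = ⌊t⌋`, so that `L ≤ t` and `log n = t²`. Taking logarithms, the
left-hand side is `L · exp((2L log C₂ - t²) · s₀ / (2s₀ + L))`, and since `L ≤ t` the exponent
exceeds `-(s₀/2) t` by at most the constant `2 s₀ log C₂ + 2 s₀²`.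
-/

open Real

theorem two_mul_sub_sq_mul_div_le {s a t L : ℝ} (hs : 0 < s) (ha : 0 ≤ a) (hL : 0 ≤ L)
    (hLt : L ≤ t) :
    (2 * L * a - t ^ 2) * (s / (2 * s + L)) ≤ 2 * s * a + 2 * s ^ 2 - s / 2 * t := by
  rw [mul_comm, div_mul_eq_mul_div, div_le_iff₀ (by positivity)]
  nlinarith [mul_nonneg hs.le (sq_nonneg (t - s)),
    mul_nonneg (mul_nonneg hs.le (hL.trans hLt)) (sub_nonneg.2 hLt),
    mul_nonneg (mul_nonneg hs.le hs.le) ha, mul_nonneg (mul_nonneg hs.le hs.le) hL,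
    pow_pos hs 3]

theorem natCast_mul_pow_div_rpow_le {s C x : ℝ} {L : ℕ} (hs : 0 < s) (hC : 1 ≤ C) (hx : 1 ≤ x)
    (hL : (L : ℝ) ≤ √(log x)) :
    L * (C ^ (2 * L) / x) ^ (s / (2 * s + L)) ≤
      exp (2 * s * log C + 2 * s ^ 2) * √(log x) * exp (-(s / 2) * √(log x)) := by
  have hx₀ : 0 < x := one_pos.trans_le hx
  have hC₀ : 0 < C := one_pos.trans_le hC
  have hlog_sq : √(log x) ^ 2 = log x := sq_sqrt (log_nonneg hx)
  have hexponent := two_mul_sub_sq_mul_div_le hs (log_nonneg hC) L.cast_nonneg hL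
  rw [hlog_sq] at hexponent
  rw [rpow_def_of_pos (by positivity), log_div (by positivity) hx₀.ne', log_pow]
  push_cast
  calc (L : ℝ) * exp ((2 * L * log C - log x) * (s / (2 * s + L)))
      ≤ √(log x) * exp (2 * s * log C + 2 * s ^ 2 - s / 2 * √(log x)) :=
        mul_le_mul hL (exp_le_exp.2 hexponent) (exp_pos _).le (sqrt_nonneg _)
    _ = exp (2 * s * log C + 2 * s ^ 2) * √(log x) * exp (-(s / 2) * √(log x)) := by
        rw [sub_eq_add_neg, exp_add]; ring_nf

/-- With L_n = ⌊√(log n)⌋ and C₂ > 1, s₀ > 0, there is c > 0 such that for large n: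
L_n (C₂^{2L_n}/n)^{s₀/(2s₀+L_n)} ≤ c √(log n) exp(−(s₀/2)√(log n)). -/
theorem stmt3 (s₀ C₂ : ℝ) (hs : 0 < s₀) (hC : 1 < C₂) :
    ∃ c : ℝ, 0 < c ∧ ∃ N : ℕ, ∀ n : ℕ, N ≤ n →
      (⌊Real.sqrt (Real.log n)⌋₊ : ℝ) *
          ((C₂ ^ (2 * ⌊Real.sqrt (Real.log n)⌋₊) / (n : ℝ)) ^
            (s₀ / (2 * s₀ + (⌊Real.sqrt (Real.log n)⌋₊ : ℝ)))) ≤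
        c * Real.sqrt (Real.log n) * Real.exp (-(s₀ / 2) * Real.sqrt (Real.log n)) :=
  ⟨_, exp_pos _, 1, fun n hn =>
    natCast_mul_pow_div_rpow_le hs hC.le (by exact_mod_cast hn) (Nat.floor_le (sqrt_nonneg _))⟩
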